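/- arXiv:2002.10611 — 3 statements merged into one kernel-verified Lean document; each statement's English description precedes it below -/
import Mathlib

section
/- Let k ≥ 1, and define φ(x,y) = (x² − 2 − (y−2)(y+2−x²)·S_k(y)·S_{k−1}(y) − (y−2))·(1 + (y+2−x²)·S_{k−1}(y)·(S_k(y)−S_{k−1}(y))) − 1, i.e. φ(x,y) = λ(x,y)·α(x,y) − 1 with λ and α as in the Riley polynomial of J(2k+1,4). Then for every n ≥ 5, with x_n = 2cos(π/n), the polynomial y ↦ φ(x_n, y) has a real root y_n > 2. -/
noncomputable def S : ℕ → ℝ → ℝ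
  | 0, _ => 1
  | 1, z => z
  | n + 2, z => z * S (n + 1) z - S n z

noncomputable def lam (k : ℕ) (x y : ℝ) : ℝ :=
  x ^ 2 - y - (y - 2) * (y + 2 - x ^ 2) * S k y * S (k - 1) y

noncomputable def alpha (k : ℕ) (x y : ℝ) : ℝ :=
  1 + (y + 2 - x ^ 2) * S (k - 1) y * (S k y - S (k - 1) y)

lemma contS (n : ℕ) : Continuous (S n) := by
  induction n using Nat.strong_induction_on with
  | _ n ih =>
    match n with
    | 0 => exact continuous_const
    | 1 => exact continuous_id
    | n + 2 =>
      show Continuous fun z => z * S (n + 1) z - S n z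
      exact (continuous_id.mul (ih (n + 1) (by omega))).sub (ih n (by omega))

lemma S_two (n : ℕ) : S n 2 = n + 1 := by
  induction n using Nat.strong_induction_on with
  | _ n ih =>
    match n with
    | 0 => norm_num [S]
    | 1 => norm_num [S]
    | n + 2 =>
      have h1 := ih (n + 1) (by omega)
      have h0 := ih n (by omega)
      show 2 * S (n + 1) 2 - S n 2 = _
      rw [h1, h0]; push_cast; ring

lemma S_mono {y : ℝ} (hy : 2 ≤ y) : ∀ n, 1 ≤ S n y ∧ S n y ≤ S (n + 1) y := by
  intro n
  induction n with
  | zero => refine ⟨by norm_num [S], by norm_num [S]; linarith⟩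
  | succ m ih =>
    obtain ⟨h1, h2⟩ := ih
    have key : S (m + 2) y = y * S (m + 1) y - S m y := rfl
    exact ⟨by linarith, by rw [key]; nlinarith⟩

theorem riley_root_J_2k1_4 (k : ℕ) (hk : 1 ≤ k) (n : ℕ) (hn : 5 ≤ n) :
    ∃ y : ℝ, 2 < y ∧
      lam k (2 * Real.cos (Real.pi / n)) y * alpha k (2 * Real.cos (Real.pi / n)) y - 1 = 0 := by
  obtain ⟨m, rfl⟩ : ∃ m, k = m + 1 := ⟨k - 1, by omega⟩
  set x : ℝ := 2 * Real.cos (Real.pi / n) with hx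
  -- bounds on x
  have hn0 : (0 : ℝ) < n := by positivity
  have hpi5 : Real.pi / n ≤ Real.pi / 5 := by
    apply div_le_div_of_nonneg_left Real.pi_pos.le (by norm_num)
    exact_mod_cast hn
  have hpos : 0 < Real.pi / n := div_pos Real.pi_pos hn0
  have hc5 : Real.cos (Real.pi / 5) ≤ Real.cos (Real.pi / n) := by
    apply Real.cos_le_cos_of_nonneg_of_le_pi hpos.le _ hpi5
    linarith [Real.pi_pos]
  have hcos5 : Real.cos (Real.pi / 5) = (1 + Real.sqrt 5) / 4 := Real.cos_pi_div_five
  have hs5 : Real.sqrt 5 ≥ 2.2 := by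
    rw [show (2.2 : ℝ) = Real.sqrt (2.2 ^ 2) by rw [Real.sqrt_sq]; norm_num]
    exact Real.sqrt_le_sqrt (by norm_num)
  have hxlb : (1.6 : ℝ) ≤ x := by rw [hx]; nlinarith
  have hxub : x ≤ 2 := by rw [hx]; nlinarith [Real.cos_le_one (Real.pi / n)]
  have hx2ub : x ^ 2 ≤ 4 := by nlinarith
  have hx2lb : (2.56 : ℝ) ≤ x ^ 2 := by nlinarith
  clear hc5 hcos5 hs5 hpi5 hpos hn0 hxlb hxub hx hn hk
  -- the function
  set f : ℝ → ℝ := fun y => lam (m + 1) x y * alpha (m + 1) x y - 1 with hf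
  have hml : m + 1 - 1 = m := rfl
  have hcS1 : Continuous (S (m + 1)) := contS (m + 1)
  have hcS0 : Continuous (S m) := contS m
  have hcont : Continuous f := by
    apply Continuous.sub _ continuous_const
    apply Continuous.mul
    · unfold lam
      rw [hml]
      exact (continuous_const.sub continuous_id).sub
        ((((continuous_id.sub continuous_const).mul
          ((continuous_id.add continuous_const).sub continuous_const)).mul hcS1).mul hcS0)
    · unfold alpha
      rw [hml]
      exact continuous_const.add
        ((((continuous_id.add continuous_const).sub continuous_const).mul hcS0).mul
          (hcS1.sub hcS0))
  have hmz : (0 : ℝ) ≤ (m : ℝ) := Nat.cast_nonneg m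
  have hf2 : 0 < f 2 := by
    have h1 : S (m + 1) 2 = (m : ℝ) + 2 := by rw [S_two]; push_cast; ring
    have h0 : S (m + 1 - 1) 2 = (m : ℝ) + 1 := by rw [hml, S_two]
    have e : f 2 = (x ^ 2 - 2) * (1 + (4 - x ^ 2) * ((m : ℝ) + 1)) - 1 := by
      simp only [hf, lam, alpha, h1, h0]; ring
    rw [e]
    nlinarith [mul_nonneg (show (0:ℝ) ≤ x ^ 2 - 2.56 by linarith)
        (show (0:ℝ) ≤ 4 - x ^ 2 by linarith),
      mul_nonneg (mul_nonneg (show (0:ℝ) ≤ x ^ 2 - 2 by linarith)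
        (show (0:ℝ) ≤ 4 - x ^ 2 by linarith)) hmz]
  have hf5 : f 5 < 0 := by
    obtain ⟨hA1, hAB⟩ := S_mono (by norm_num : (2:ℝ) ≤ 5) m
    have e : f 5 = (x ^ 2 - 5 - 3 * (7 - x ^ 2) * S (m + 1) 5 * S m 5) *
        (1 + (7 - x ^ 2) * S m 5 * (S (m + 1) 5 - S m 5)) - 1 := by
      simp only [hf, lam, alpha, hml]; ring
    rw [e]
    set A := S m 5 with hA
    set B := S (m + 1) 5 with hB
    clear_value A B
    have hB1 : 1 ≤ B := le_trans hA1 hAB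
    have hBA : (1 : ℝ) ≤ B * A := le_trans hB1 (by nlinarith)
    have h7 : (3 : ℝ) ≤ 7 - x ^ 2 := by linarith
    have hlam : x ^ 2 - 5 - 3 * (7 - x ^ 2) * B * A < 0 := by nlinarith
    have halpha : 1 ≤ 1 + (7 - x ^ 2) * A * (B - A) := by
      nlinarith [mul_nonneg (mul_nonneg (show (0:ℝ) ≤ 7 - x ^ 2 by linarith)
        (show (0:ℝ) ≤ A by linarith)) (show (0:ℝ) ≤ B - A by linarith)]
    nlinarith [mul_nonneg (show (0:ℝ) ≤ -(x ^ 2 - 5 - 3 * (7 - x ^ 2) * B * A) by linarith)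
      (show (0:ℝ) ≤ (1 + (7 - x ^ 2) * A * (B - A)) - 1 by linarith)]
  obtain ⟨c, hc, hfc⟩ := intermediate_value_Icc' (by norm_num : (2:ℝ) ≤ 5)
    hcont.continuousOn (Set.mem_Icc.mpr ⟨hf5.le, hf2.le⟩)
  refine ⟨c, ?_, hfc⟩
  rcases lt_or_eq_of_le hc.1 with h | h
  · exact h
  · exfalso; rw [← h] at hfc; simp only [hf] at hf2 hfc; linarith
end

section
/- Fix integers k ≥ 1, M ≥ 2, and n ≥ 3 with 2cos((M−1)π/M) ≤ 4cos²(π/n) − 2. Let x_n = 2cos(π/n), λ and α as for J(2k+1,·), and ψ(x,y) = S_M(λ(x,y)) − S_{M−1}(λ(x,y))·α(x,y). Then ψ(x_n, ·) has a real root y_n > 2. -/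
lemma S_cont : ∀ n : ℕ, Continuous (S n)
  | 0 => continuous_const
  | 1 => continuous_id
  | n + 2 => by
    have h1 := S_cont (n + 1)
    have h2 := S_cont n
    show Continuous fun z => z * S (n + 1) z - S n z
    exact (continuous_id.mul h1).sub h2

lemma S_trig : ∀ (m : ℕ) (θ : ℝ),
    S m (2 * Real.cos θ) * Real.sin θ = Real.sin (((m : ℝ) + 1) * θ)
  | 0, θ => by simp [S]
  | 1, θ => by
    simp only [S]
    rw [show ((1 : ℕ) : ℝ) + 1 = 2 by norm_num, show (2 : ℝ) * θ = θ + θ by ring,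
      Real.sin_add]
    ring
  | m + 2, θ => by
    have h1 := S_trig (m + 1) θ
    have h2 := S_trig m θ
    have e1 := Real.sin_add (((m : ℝ) + 2) * θ) θ
    have e2 := Real.sin_sub (((m : ℝ) + 2) * θ) θ
    show (2 * Real.cos θ * S (m + 1) (2 * Real.cos θ) - S m (2 * Real.cos θ)) *
        Real.sin θ = _
    push_cast at h1 h2 ⊢
    rw [show ((m : ℝ) + 2 + 1) * θ = (((m : ℝ) + 2) * θ) + θ by ring]
    rw [show ((m : ℝ) + 1) * θ = (((m : ℝ) + 2) * θ) - θ by ring] at h2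
    rw [show ((m : ℝ) + 1 + 1) * θ = ((m : ℝ) + 2) * θ by ring] at h1
    linear_combination (2 * Real.cos θ) * h1 - h2 - e1 - e2

lemma S_ge {y : ℝ} (hy : 2 ≤ y) : ∀ n : ℕ, 1 ≤ S n y ∧ S n y ≤ S (n + 1) y := by
  intro n
  induction n with
  | zero =>
    constructor
    · simp [S]
    · show (1 : ℝ) ≤ S 1 y
      simp only [S]; linarith
  | succ m ih =>
    obtain ⟨h1, h2⟩ := ih
    refine ⟨by linarith, ?_⟩
    have h3 : S (m + 2) y = y * S (m + 1) y - S m y := rfl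
    rw [h3]
    nlinarith

lemma alpha_pos {k : ℕ} {x y : ℝ} (hx : x ^ 2 ≤ 4) (hy : 2 ≤ y) :
    0 < alpha k x y := by
  obtain ⟨h1, h2⟩ := S_ge hy (k - 1)
  have hxy : 0 ≤ y + 2 - x ^ 2 := by linarith
  have hk2 : S (k - 1) y ≤ S k y := by
    rcases Nat.eq_zero_or_pos k with h | h
    · subst h; simp
    · have : k - 1 + 1 = k := by omega
      rwa [this] at h2
  unfold alpha
  nlinarith [mul_nonneg (mul_nonneg hxy (by linarith : (0:ℝ) ≤ S (k - 1) y))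
    (by linarith : (0:ℝ) ≤ S k y - S (k - 1) y)]

lemma lam_le {k : ℕ} {x y : ℝ} (hx : x ^ 2 ≤ 4) (hy : 2 ≤ y) :
    lam k x y ≤ x ^ 2 - y := by
  obtain ⟨h1, _⟩ := S_ge hy k
  obtain ⟨h1', _⟩ := S_ge hy (k - 1)
  have hxy : 0 ≤ y + 2 - x ^ 2 := by linarith
  unfold lam
  nlinarith [mul_nonneg (mul_nonneg (mul_nonneg (by linarith : (0:ℝ) ≤ y - 2) hxy)
    (by linarith : (0:ℝ) ≤ S k y)) (by linarith : (0:ℝ) ≤ S (k - 1) y)]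

lemma lam_two {k : ℕ} {x : ℝ} : lam k x 2 = x ^ 2 - 2 := by
  unfold lam; ring

lemma lam_cont {k : ℕ} {x : ℝ} : Continuous (lam k x) := by
  have h1 := S_cont k
  have h2 := S_cont (k - 1)
  unfold lam
  fun_prop

lemma alpha_cont {k : ℕ} {x : ℝ} : Continuous (alpha k x) := by
  have h1 := S_cont k
  have h2 := S_cont (k - 1)
  unfold alpha
  fun_prop

lemma lam_reach {k : ℕ} {x : ℝ} (hx : x ^ 2 ≤ 4) {t : ℝ} (ht : t < x ^ 2 - 2) :
    ∃ y : ℝ, 2 < y ∧ lam k x y = t := by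
  set Y : ℝ := max 2 (x ^ 2 - t) + 1 with hYdef
  have hY2 : (2 : ℝ) ≤ Y := by
    have := le_max_left (2 : ℝ) (x ^ 2 - t); simp only [hYdef]; linarith
  have hYt : lam k x Y < t := by
    have h := lam_le (k := k) hx hY2
    have := le_max_right (2 : ℝ) (x ^ 2 - t)
    have : x ^ 2 - Y < t := by simp only [hYdef]; linarith
    linarith
  have hcont : ContinuousOn (lam k x) (Set.Icc 2 Y) := lam_cont.continuousOn
  have hmem : t ∈ Set.Icc (lam k x Y) (lam k x 2) := by
    constructor
    · exact le_of_lt hYt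
    · rw [lam_two]; linarith
  obtain ⟨y, hy, hyt⟩ := intermediate_value_Icc' hY2 hcont hmem
  refine ⟨y, ?_, hyt⟩
  rcases eq_or_lt_of_le hy.1 with h | h
  · exfalso
    rw [← h, lam_two] at hyt
    linarith
  · exact h

lemma sin_theta1_pos {M : ℕ} (hM : 2 ≤ M) :
    0 < Real.sin (Real.pi / M) := by
  have hM0 : (0 : ℝ) < M := by exact_mod_cast (by omega : 0 < M)
  apply Real.sin_pos_of_pos_of_lt_pi
  · exact div_pos Real.pi_pos hM0
  · have h1 : (1 : ℝ) < M := by exact_mod_cast hM.trans_lt' one_lt_two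
    rw [div_lt_iff₀ hM0]
    nlinarith [Real.pi_pos]

lemma theta1_eq {M : ℕ} (hM : 2 ≤ M) :
    ((M : ℝ) - 1) * Real.pi / M = Real.pi - Real.pi / M := by
  have hM0 : (M : ℝ) ≠ 0 := Nat.cast_ne_zero.mpr (by omega)
  field_simp

lemma S_vals_theta1 {M : ℕ} (hM : 2 ≤ M) :
    S (M - 1) (2 * Real.cos (((M : ℝ) - 1) * Real.pi / M)) = 0 ∧
    S M (2 * Real.cos (((M : ℝ) - 1) * Real.pi / M)) = (-1 : ℝ) ^ (M + 1) := by
  have hM0 : (M : ℝ) ≠ 0 := Nat.cast_ne_zero.mpr (by omega)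
  set θ := ((M : ℝ) - 1) * Real.pi / M with hθ
  have hsθ : Real.sin θ = Real.sin (Real.pi / M) := by
    rw [hθ, theta1_eq hM, Real.sin_pi_sub]
  have hspos : 0 < Real.sin θ := hsθ ▸ sin_theta1_pos hM
  constructor
  · have h := S_trig (M - 1) θ
    have hcast : ((M - 1 : ℕ) : ℝ) + 1 = (M : ℝ) := by
      have : (1 : ℕ) ≤ M := by omega
      push_cast [Nat.cast_sub this]
      ring
    rw [hcast] at h
    have harg : (M : ℝ) * θ = ((M - 1 : ℕ) : ℝ) * Real.pi := by
      have : (1 : ℕ) ≤ M := by omega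
      push_cast [Nat.cast_sub this]
      rw [hθ]; field_simp
    rw [harg, Real.sin_nat_mul_pi] at h
    exact (mul_eq_zero.mp h).resolve_right (ne_of_gt hspos)
  · have h := S_trig M θ
    have harg : ((M : ℝ) + 1) * θ = (M : ℝ) * Real.pi - Real.pi / M := by
      rw [hθ]; field_simp; ring
    rw [harg, Real.sin_nat_mul_pi_sub] at h
    have : S M (2 * Real.cos θ) * Real.sin θ = (-1 : ℝ) ^ (M + 1) * Real.sin θ := by
      rw [h, hsθ, pow_succ]
      ring
    exact mul_right_cancel₀ (ne_of_gt hspos) this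

lemma S_vals_theta2 {M : ℕ} (hM : 2 ≤ M) :
    S M (2 * Real.cos ((M : ℝ) * Real.pi / ((M : ℝ) + 1))) = 0 ∧
    S (M - 1) (2 * Real.cos ((M : ℝ) * Real.pi / ((M : ℝ) + 1))) = (-1 : ℝ) ^ (M + 1) := by
  have hM0 : (0 : ℝ) < M := by exact_mod_cast (by omega : 0 < M)
  have hM1 : (0 : ℝ) < (M : ℝ) + 1 := by linarith
  set θ := (M : ℝ) * Real.pi / ((M : ℝ) + 1) with hθ
  have hspos : 0 < Real.sin θ := by
    apply Real.sin_pos_of_pos_of_lt_pi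
    · rw [hθ]; positivity
    · rw [hθ, div_lt_iff₀ hM1]
      nlinarith [Real.pi_pos]
  constructor
  · have h := S_trig M θ
    have harg : ((M : ℝ) + 1) * θ = (M : ℝ) * Real.pi := by
      rw [hθ]; field_simp
    rw [harg, Real.sin_nat_mul_pi] at h
    exact (mul_eq_zero.mp h).resolve_right (ne_of_gt hspos)
  · have h := S_trig (M - 1) θ
    have hcast : ((M - 1 : ℕ) : ℝ) + 1 = (M : ℝ) := by
      have : (1 : ℕ) ≤ M := by omega
      push_cast [Nat.cast_sub this]
      ring
    rw [hcast] at h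
    have harg : (M : ℝ) * θ = (M : ℝ) * Real.pi - θ := by
      rw [hθ]; field_simp; ring
    rw [harg, Real.sin_nat_mul_pi_sub] at h
    have h2 : S (M - 1) (2 * Real.cos θ) * Real.sin θ =
        (-1 : ℝ) ^ (M + 1) * Real.sin θ := by
      rw [h, pow_succ]; ring
    exact mul_right_cancel₀ (ne_of_gt hspos) h2

lemma theta2_lt {M : ℕ} (hM : 2 ≤ M) :
    2 * Real.cos ((M : ℝ) * Real.pi / ((M : ℝ) + 1)) <
      2 * Real.cos (((M : ℝ) - 1) * Real.pi / M) := by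
  have hM0 : (0 : ℝ) < M := by exact_mod_cast (by omega : 0 < M)
  have hM1 : (0 : ℝ) < (M : ℝ) + 1 := by linarith
  have hpi := Real.pi_pos
  have hlt : ((M : ℝ) - 1) * Real.pi / M < (M : ℝ) * Real.pi / ((M : ℝ) + 1) := by
    rw [div_lt_div_iff₀ hM0 hM1]
    nlinarith
  have hM2 : (2 : ℝ) ≤ M := by exact_mod_cast hM
  have h1 : 0 ≤ ((M : ℝ) - 1) * Real.pi / M := by
    apply div_nonneg _ (le_of_lt hM0)
    nlinarith
  have h2 : (M : ℝ) * Real.pi / ((M : ℝ) + 1) ≤ Real.pi := by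
    rw [div_le_iff₀ hM1]; nlinarith
  have := Real.cos_lt_cos_of_nonneg_of_le_pi h1 h2 hlt
  linarith

theorem riley_root_J_2k1_neg2M (k M n : ℕ) (hk : 1 ≤ k) (hM : 2 ≤ M) (hn : 3 ≤ n)
    (hc : 2 * Real.cos (((M : ℝ) - 1) * Real.pi / (M : ℝ)) ≤
      4 * Real.cos (Real.pi / n) ^ 2 - 2) :
    ∃ y : ℝ, 2 < y ∧
      S M (lam k (2 * Real.cos (Real.pi / n)) y) -
        S (M - 1) (lam k (2 * Real.cos (Real.pi / n)) y) *
          alpha k (2 * Real.cos (Real.pi / n)) y = 0 := by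
  set x : ℝ := 2 * Real.cos (Real.pi / n) with hxdef
  set g : ℝ → ℝ := fun y =>
    S M (lam k x y) - S (M - 1) (lam k x y) * alpha k x y with hgdef
  have hx4 : x ^ 2 ≤ 4 := by
    have h1 : Real.cos (Real.pi / n) ≤ 1 := Real.cos_le_one _
    have h2 : -1 ≤ Real.cos (Real.pi / n) := Real.neg_one_le_cos _
    rw [hxdef]; nlinarith
  set c1 : ℝ := 2 * Real.cos (((M : ℝ) - 1) * Real.pi / M) with hc1def
  set t2 : ℝ := 2 * Real.cos ((M : ℝ) * Real.pi / ((M : ℝ) + 1)) with ht2def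
  have hc' : c1 ≤ x ^ 2 - 2 := by
    rw [hc1def, hxdef]; nlinarith [hc]
  have ht2c1 : t2 < c1 := theta2_lt hM
  obtain ⟨hv1, hv2⟩ := S_vals_theta1 hM
  obtain ⟨hv3, hv4⟩ := S_vals_theta2 hM
  rw [← hc1def] at hv1 hv2
  rw [← ht2def] at hv3 hv4
  have hgcont : Continuous g := by
    have h1 := S_cont M
    have h2 := S_cont (M - 1)
    have h3 : Continuous (lam k x) := lam_cont
    have h4 : Continuous (alpha k x) := alpha_cont
    rw [hgdef]
    fun_prop
  -- the point y2 where g = -(-1)^(M+1) * alpha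
  obtain ⟨y2, hy2gt, hy2⟩ := lam_reach (k := k) hx4 (lt_of_lt_of_le ht2c1 hc')
  have hgy2 : g y2 = -((-1 : ℝ) ^ (M + 1)) * alpha k x y2 := by
    rw [hgdef]
    simp only
    rw [hy2, hv3, hv4]
    ring
  have hay2 : 0 < alpha k x y2 := alpha_pos hx4 (le_of_lt hy2gt)
  -- a point a ≥ 2 with g a = (-1)^(M+1), and information to conclude y > 2
  rcases eq_or_lt_of_le hc' with hcase | hcase
  · -- c1 = x^2 - 2 : use a = 2
    have hga : g 2 = (-1 : ℝ) ^ (M + 1) := by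
      rw [hgdef]
      simp only
      rw [lam_two, ← hcase, hv1, hv2]
      ring
    have h2y2 : (2 : ℝ) ≤ y2 := le_of_lt hy2gt
    have hmem : (0 : ℝ) ∈ Set.uIcc (g 2) (g y2) := by
      rw [Set.mem_uIcc]
      rcases neg_one_pow_eq_or ℝ (M + 1) with hs | hs
      · right
        constructor
        · rw [hgy2, hs]; nlinarith
        · rw [hga, hs]; norm_num
      · left
        constructor
        · rw [hga, hs]; norm_num
        · rw [hgy2, hs]; nlinarith
    obtain ⟨y, hymem, hgy⟩ := intermediate_value_uIcc hgcont.continuousOn hmem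
    refine ⟨y, ?_, hgy⟩
    have hylb : min 2 y2 ≤ y := hymem.1
    have h2y : (2 : ℝ) ≤ y := by rw [min_eq_left h2y2] at hylb; exact hylb
    rcases eq_or_lt_of_le h2y with h | h
    · exfalso
      rw [← h] at hgy
      rw [hga] at hgy
      rcases neg_one_pow_eq_or ℝ (M + 1) with hs | hs <;> rw [hs] at hgy <;> norm_num at hgy
    · exact h
  · -- c1 < x^2 - 2 : use a = y1 with lam y1 = c1
    obtain ⟨y1, hy1gt, hy1⟩ := lam_reach (k := k) hx4 hcase
    have hga : g y1 = (-1 : ℝ) ^ (M + 1) := by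
      rw [hgdef]
      simp only
      rw [hy1, hv1, hv2]
      ring
    have hmem : (0 : ℝ) ∈ Set.uIcc (g y1) (g y2) := by
      rw [Set.mem_uIcc]
      rcases neg_one_pow_eq_or ℝ (M + 1) with hs | hs
      · right
        constructor
        · rw [hgy2, hs]; nlinarith
        · rw [hga, hs]; norm_num
      · left
        constructor
        · rw [hga, hs]; norm_num
        · rw [hgy2, hs]; nlinarith
    obtain ⟨y, hymem, hgy⟩ := intermediate_value_uIcc hgcont.continuousOn hmem
    refine ⟨y, ?_, hgy⟩
    have hylb : min y1 y2 ≤ y := hymem.1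
    have : (2 : ℝ) < min y1 y2 := lt_min hy1gt hy2gt
    linarith
end

section
/- Let S(p,q) = ⟨c₁⟩⟨−c₂⟩⋯⟨c_k⟩ be the Riley sign sequence of a two-bridge fraction (p,q): εᵢ = sign of the representative of iq modulo 2p chosen in (−p,p), for 1 ≤ i ≤ p−1, grouped into maximal runs of length cⱼ with alternating sign. Then for p = 10s+7 and q = 4s+3 with s ≥ 1, the sign sequence is ⟨2⟩⟨−2⟩(⟨3⟩⟨−2⟩)^{2s}⟨2⟩; equivalently, writing ε as a list, ε₁ = ε₂ = 1, followed by 2s repetitions of the pattern (−1,−1,1,1,1,−1,−1) suitably merged, ending in (1,1), and in particular the total sum of run lengths Σcᵢ equals p − 1 = 10s+6. -/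
/-- The Riley sign of the `i`-th letter for the two-bridge fraction `(p,q)`:
take the representative `r'` of `i*q` modulo `2p` in the interval `(-p, p)`,
and record its sign. -/
def eps (p q i : ℕ) : ℤ :=
  let r : ℤ := (i * q : ℤ) % (2 * p)
  let r' : ℤ := if r < p then r else r - 2 * p
  if 0 < r' then 1 else -1

/-!
Here `p = 10s + 7`, `q = 4s + 3` and `5q = 2p + 1`, so writing `i = 5m + t` with `t < 5` gives
`iq ≡ m + tq (mod 2p)`. For `i ≤ p - 1` we have `m ≤ 2s + 1`, hence `0 ≤ m + tq < 2p`, and the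
sign of the balanced residue is `+` exactly when `m + tq < p`, i.e. when `t ≤ 2`. The sign sequence
is therefore the period-5 pattern `+ + + - -`, read from `i = 1` to `i = p - 1`.
-/

theorem eps_eq_ite {p : ℕ} (hp : 0 < p) (q i : ℕ) :
    eps p q i = if 0 < i * q % (2 * p) ∧ i * q % (2 * p) < p then 1 else -1 := by
  have hlt : i * q % (2 * p) < 2 * p := Nat.mod_lt _ (by omega)
  have hcast : (i * q : ℤ) % (2 * p) = ((i * q % (2 * p) : ℕ) : ℤ) := by push_cast; rfl
  simp only [eps, hcast]
  split_ifs <;> omega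

theorem mul_mod_of_mul_eq_add_one {k q N : ℕ} (h : k * q = N + 1) (m t : ℕ) :
    (k * m + t) * q % N = (m + t * q) % N := by
  have : (k * m + t) * q = m + t * q + N * m := by
    rw [add_mul, mul_right_comm, h]; ring
  rw [this, Nat.add_mul_mod_self_left]

def klSign (i : ℕ) : ℤ := if i % 5 ≤ 2 then 1 else -1

theorem klSign_periodic : Function.Periodic klSign 5 := by
  intro i; simp [klSign]

theorem eps_eq_klSign {s i : ℕ} (hi : 1 ≤ i) (hi' : i ≤ 10 * s + 6) :
    eps (10 * s + 7) (4 * s + 3) i = klSign i := by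
  obtain ⟨m, t, ht, rfl⟩ : ∃ m t, t < 5 ∧ i = 5 * m + t :=
    ⟨i / 5, i % 5, Nat.mod_lt _ (by norm_num), by omega⟩
  have hres : (5 * m + t) * (4 * s + 3) % (2 * (10 * s + 7)) = m + t * (4 * s + 3) := by
    rw [mul_mod_of_mul_eq_add_one (by ring), Nat.mod_eq_of_lt]
    have : t * (4 * s + 3) ≤ 4 * (4 * s + 3) := Nat.mul_le_mul_right _ (by omega)
    omega
  have hsign : (0 < m + t * (4 * s + 3) ∧ m + t * (4 * s + 3) < 10 * s + 7) ↔
      (5 * m + t) % 5 ≤ 2 := by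
    interval_cases t <;> omega
  rw [eps_eq_ite (by omega), hres, klSign, if_congr hsign rfl rfl]

theorem List.ofFn_eq_map_range' {α : Type*} (f : ℕ → α) (a n : ℕ) :
    List.ofFn (fun i : Fin n => f (i + a)) = (List.range' a n).map f := by
  apply List.ext_getElem <;> simp [add_comm]

theorem List.map_range'_mul_of_periodic {α : Type*} {f : ℕ → α} {n : ℕ}
    (hf : Function.Periodic f n) (a k : ℕ) :
    (List.range' a (n * k)).map f = (List.replicate k ((List.range' a n).map f)).flatten := by
  induction k generalizing a with
  | zero => simp
  | succ k ih =>
    have hshift : (List.range' (a + n) n).map f = (List.range' a n).map f := by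
      rw [add_comm, ← List.map_add_range', List.map_map]
      exact List.map_congr_left fun x _ => by simp [add_comm n x, hf x]
    rw [Nat.mul_succ, add_comm, ← List.range'_append, List.map_append, one_mul, ih, hshift,
      List.replicate_succ, List.flatten_cons]

theorem sign_sequence_Kl_general (s : ℕ) :
    (List.ofFn (fun i : Fin (10 * s + 6) => eps (10 * s + 7) (4 * s + 3) (i.val + 1))) =
      ([1, 1, -1, -1] : List ℤ) ++
        (List.replicate (2 * s) ([1, 1, 1, -1, -1] : List ℤ)).flatten ++ [1, 1] := by
  have hsigns : (List.range' 1 (10 * s + 6)).map (eps (10 * s + 7) (4 * s + 3)) =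
      (List.range' 1 (10 * s + 6)).map klSign :=
    List.map_congr_left fun i hi => by
      rw [List.mem_range'_1] at hi
      exact eps_eq_klSign hi.1 (by omega)
  have hsplit : List.range' 1 (10 * s + 6) =
      List.range' 1 4 ++ List.range' 5 (5 * (2 * s)) ++ List.range' (10 * s + 5) 2 := by
    rw [show 10 * s + 6 = 4 + 5 * (2 * s) + 2 by ring, ← List.range'_append, ← List.range'_append]
    congr 2; ring
  have hhead : (List.range' 1 4).map klSign = [1, 1, -1, -1] := by decide
  have hperiod : (List.range' 5 5).map klSign = [1, 1, 1, -1, -1] := by decide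
  have htail : (List.range' (10 * s + 5) 2).map klSign = [1, 1] := by
    have h0 : (10 * s + 5) % 5 ≤ 2 := by omega
    have h1 : (10 * s + 5 + 1) % 5 ≤ 2 := by omega
    rw [show List.range' (10 * s + 5) 2 = [10 * s + 5, 10 * s + 5 + 1] from rfl]
    simp only [List.map_cons, List.map_nil, klSign, if_pos h0, if_pos h1]
  rw [List.ofFn_eq_map_range' (eps _ _), hsigns, hsplit, List.map_append, List.map_append,
    List.map_range'_mul_of_periodic klSign_periodic, hhead, hperiod, htail]

theorem sign_sequence_Kl (s : ℕ) (hs : 1 ≤ s) :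
    (List.ofFn (fun i : Fin (10 * s + 6) => eps (10 * s + 7) (4 * s + 3) (i.val + 1))) =
      ([1, 1, -1, -1] : List ℤ) ++
        (List.replicate (2 * s) ([1, 1, 1, -1, -1] : List ℤ)).flatten ++ [1, 1] :=
  sign_sequence_Kl_general s
end
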